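/- arXiv:2111.07292 — 8 statements merged into one kernel-verified Lean document; each statement's English description precedes it below -/
import Mathlib

section
/- Suppose z_1, ..., z_N are pairwise distinct complex numbers, Γ_1, ..., Γ_N are real, and Λ ∈ ℂ satisfies Λ·z_n = Σ_{j≠n} Γ_j / conj(z_n − z_j) for every n. Then Λ·I = L, where I = Σ_n Γ_n |z_n|² and L = Σ_{j<k} Γ_j Γ_k. -/
open Finset Complex

lemma sum_pairing {M : Type*} [AddCommMonoid M] {N : ℕ} (f : Fin N → Fin N → M)
    (hdiag : ∀ n, f n n = 0) :
    ∑ n, ∑ j, f n j = ∑ n, ∑ j, if n < j then f n j + f j n else 0 := by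
  have h1 : ∑ n, ∑ j, f n j
      = (∑ n, ∑ j, if n < j then f n j else 0) + ∑ n, ∑ j, if j < n then f n j else 0 := by
    rw [← Finset.sum_add_distrib]
    apply Finset.sum_congr rfl; intro n _
    rw [← Finset.sum_add_distrib]
    apply Finset.sum_congr rfl; intro j _
    rcases lt_trichotomy n j with h | h | h
    · simp [h, not_lt_of_gt h]
    · subst h; simp [hdiag]
    · simp [h, not_lt_of_gt h]
  rw [h1, Finset.sum_comm (f := fun n j => if j < n then f n j else 0),
    ← Finset.sum_add_distrib]
  apply Finset.sum_congr rfl; intro n _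
  rw [← Finset.sum_add_distrib]
  apply Finset.sum_congr rfl; intro j _
  split_ifs <;> simp

theorem central_config_Lambda_I_eq_L (N : ℕ) (Γ : Fin N → ℝ) (z : Fin N → ℂ)
    (hz : Function.Injective z) (Λ : ℂ)
    (hcc : ∀ n, Λ * z n = ∑ j ∈ univ.filter (· ≠ n),
      (Γ j : ℂ) / (starRingEnd ℂ) (z n - z j)) :
    Λ * (∑ n, (Γ n : ℂ) * (z n * (starRingEnd ℂ) (z n)))
      = (∑ j, ∑ k, if j < k then (Γ j : ℂ) * (Γ k : ℂ) else 0) := by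
  set f : Fin N → Fin N → ℂ := fun n j =>
    if j ≠ n then (Γ n : ℂ) * (Γ j : ℂ) * (starRingEnd ℂ) (z n) / (starRingEnd ℂ) (z n - z j)
    else 0 with hf
  have key : ∀ n, (Γ n : ℂ) * (starRingEnd ℂ) (z n) * (Λ * z n) = ∑ j, f n j := by
    intro n
    rw [hcc n, Finset.mul_sum, ← Finset.sum_filter]
    apply Finset.sum_congr rfl; intro j _
    ring
  have hL : Λ * (∑ n, (Γ n : ℂ) * (z n * (starRingEnd ℂ) (z n))) = ∑ n, ∑ j, f n j := by
    rw [Finset.mul_sum]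
    apply Finset.sum_congr rfl; intro n _
    rw [← key n]; ring
  rw [hL, sum_pairing f (by intro n; simp [hf])]
  apply Finset.sum_congr rfl; intro n _
  apply Finset.sum_congr rfl; intro j _
  split_ifs with h
  · have hne : j ≠ n := (ne_of_lt h).symm
    have hd : (starRingEnd ℂ) (z n) - (starRingEnd ℂ) (z j) ≠ 0 := by
      rw [sub_ne_zero]
      exact fun hc => hne.symm (hz (starRingEnd ℂ |>.injective hc))
    have hd' : (starRingEnd ℂ) (z j) - (starRingEnd ℂ) (z n) ≠ 0 := by
      rw [sub_ne_zero] at hd ⊢; exact hd.symm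
    simp only [hf, hne, hne.symm, if_true, ne_eq, not_false_eq_true, map_sub]
    field_simp [hd, hd']
    ring
  · rfl
end

section
/- Suppose z_1, ..., z_N are pairwise distinct complex numbers, Γ_1, ..., Γ_N are real vorticities, z_0 and Λ are complex numbers with Im(Λ) ≠ 0, and V_n = Λ(z_n − z_0) for every n, where V_n = Σ_{j≠n} Γ_j / conj(z_n − z_j). Then L = 0 and S = Σ_{1≤j<k≤N} Γ_j Γ_k |z_k − z_j|² = 0. -/
open Finset Complex ComplexConjugate

/-!
Write `w n = z n - z₀`. Multiplying the collapse equation by `Γ n` and summing over `n`, the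
antisymmetry of `Γ n Γ j / conj (z n - z j)` gives `Λ ∑ Γ n w n = 0`. Multiplying it instead by
`Γ n conj (w n)`, the pair `(j, k)` contributes `Γ j Γ k (conj (w j - w k)) / conj (z j - z k)
= Γ j Γ k`, so `L = Λ ∑ Γ n |w n|²`; both sums being real and `Im Λ ≠ 0`, both vanish.
Finally `S = (∑ Γ n) (∑ Γ n |w n|²) - |∑ Γ n w n|²`, a Lagrange-type identity, so `S = 0`.
-/

section PairSums

variable {ι : Type*} [Fintype ι]

theorem sum_sum_eq_zero_of_antisymm {R : Type*} [NonAssocRing R] [NoZeroDivisors R] [CharZero R]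
    (f : ι → ι → R) (hf : ∀ j k, f j k = -f k j) : ∑ j, ∑ k, f j k = 0 :=
  CharZero.eq_neg_self_iff.mp <| calc
    ∑ j, ∑ k, f j k = ∑ j, ∑ k, -f k j := sum_congr rfl fun j _ => sum_congr rfl fun k _ => hf j k
    _ = -∑ j, ∑ k, f j k := by rw [sum_comm]; simp only [sum_neg_distrib]

theorem sum_sum_ite_lt_eq_sum_sum [LinearOrder ι] {M : Type*} [AddCommGroup M] (f g : ι → ι → M)
    (hpair : ∀ j k, j < k → f j k + f k j = g j k) (hdiag : ∀ j, f j j = 0) :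
    ∑ j, ∑ k, (if j < k then g j k else 0) = ∑ j, ∑ k, f j k := by
  have hsplit : ∀ j k, f j k =
      (if j < k then f j k else 0) + (if k < j then f j k else 0) := by
    intro j k
    rcases lt_trichotomy j k with h | rfl | h
    · simp [h, h.not_gt]
    · simp [hdiag]
    · simp [h, h.not_gt]
  calc ∑ j, ∑ k, (if j < k then g j k else 0)
      = ∑ j, ∑ k, ((if j < k then f j k else 0) + (if j < k then f k j else 0)) := by
        refine sum_congr rfl fun j _ => sum_congr rfl fun k _ => ?_
        split_ifs with h
        · exact (hpair j k h).symm
        · simp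
    _ = ∑ j, ∑ k, ((if j < k then f j k else 0) + (if k < j then f j k else 0)) := by
        simp only [sum_add_distrib]
        rw [sum_comm (f := fun j k => if j < k then f k j else 0)]
    _ = ∑ j, ∑ k, f j k := by simp only [← hsplit]

end PairSums

section Lagrange

variable {ι E : Type*} [Fintype ι] [LinearOrder ι]
  [NormedAddCommGroup E] [InnerProductSpace ℝ E]

theorem sum_sum_ite_lt_mul_norm_sub_sq (Γ : ι → ℝ) (w : ι → E) :
    ∑ j, ∑ k, (if j < k then Γ j * Γ k * ‖w k - w j‖ ^ 2 else 0) =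
      (∑ j, Γ j) * ∑ j, Γ j * ‖w j‖ ^ 2 - ‖∑ j, Γ j • w j‖ ^ 2 := by
  rw [sum_sum_ite_lt_eq_sum_sum (fun j k => Γ j * Γ k * (‖w k‖ ^ 2 - inner ℝ (w j) (w k)))]
  · simp_rw [← real_inner_self_eq_norm_sq (∑ j, Γ j • w j), sum_inner, inner_sum,
      real_inner_smul_left, real_inner_smul_right, mul_sub, sum_sub_distrib, sum_mul, mul_sum]
    congr 1 <;> refine sum_congr rfl fun j _ => sum_congr rfl fun k _ => by ring
  · intro j k _
    simp only [norm_sub_sq_real, real_inner_comm (w j)]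
    ring
  · intro j
    simp

end Lagrange

section Collapse

variable {ι : Type*} [Fintype ι] {Γ : ι → ℝ} {z : ι → ℂ} {Λ z₀ : ℂ}

theorem sum_smul_sub_eq_zero_of_collapse (hΛ : Λ ≠ 0)
    (hcc : ∀ n, ∑ j, (Γ j : ℂ) / conj (z n - z j) = Λ * (z n - z₀)) :
    ∑ n, Γ n • (z n - z₀) = 0 := by
  have hsum : ∑ n, ∑ j, (Γ n : ℂ) * Γ j / conj (z n - z j) = 0 := by
    refine sum_sum_eq_zero_of_antisymm _ fun j k => ?_
    rw [← neg_sub (z j), map_neg, div_neg, mul_comm (Γ k : ℂ), neg_neg]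
  have hmul : Λ * ∑ n, Γ n • (z n - z₀) = 0 := by
    calc Λ * ∑ n, Γ n • (z n - z₀) = ∑ n, (Γ n : ℂ) * (Λ * (z n - z₀)) := by
          simp only [real_smul, mul_sum]; exact sum_congr rfl fun n _ => by ring
      _ = 0 := by simpa only [← hcc, mul_sum, mul_div_assoc] using hsum
  exact (mul_eq_zero.mp hmul).resolve_left hΛ

theorem ofReal_sum_sum_ite_lt_eq_mul_of_collapse [LinearOrder ι] (hz : Function.Injective z)
    (hcc : ∀ n, ∑ j, (Γ j : ℂ) / conj (z n - z j) = Λ * (z n - z₀)) :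
    ((∑ j, ∑ k, if j < k then Γ j * Γ k else 0 : ℝ) : ℂ) =
      Λ * ((∑ n, Γ n * ‖z n - z₀‖ ^ 2 : ℝ) : ℂ) := by
  have hpair : ∀ j k, j < k →
      (Γ j : ℂ) * Γ k * conj (z j - z₀) / conj (z j - z k) +
        Γ k * Γ j * conj (z k - z₀) / conj (z k - z j) = ((Γ j * Γ k : ℝ) : ℂ) := by
    intro j k hjk
    have hne : conj (z j - z k) ≠ 0 := by
      rw [map_ne_zero, sub_ne_zero]
      exact hz.ne hjk.ne
    rw [← neg_sub (z j) (z k), map_neg, div_neg, ← sub_eq_add_neg, div_sub_div_same,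
      div_eq_iff hne]
    push_cast
    simp only [map_sub]
    ring
  calc ((∑ j, ∑ k, if j < k then Γ j * Γ k else 0 : ℝ) : ℂ)
      = ∑ j, ∑ k, if j < k then ((Γ j * Γ k : ℝ) : ℂ) else 0 := by
        push_cast [apply_ite (ofReal : ℝ → ℂ)]; rfl
    _ = ∑ n, ∑ j, (Γ n : ℂ) * Γ j * conj (z n - z₀) / conj (z n - z j) :=
        sum_sum_ite_lt_eq_sum_sum _ _ hpair (by simp)
    _ = ∑ n, (Γ n : ℂ) * conj (z n - z₀) * (Λ * (z n - z₀)) := by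
        simp only [← hcc, mul_sum]
        exact sum_congr rfl fun n _ => sum_congr rfl fun j _ => by ring
    _ = Λ * ((∑ n, Γ n * ‖z n - z₀‖ ^ 2 : ℝ) : ℂ) := by
        push_cast
        simp only [mul_sum, ← mul_conj']
        exact sum_congr rfl fun n _ => by ring

end Collapse

theorem eq_zero_of_ofReal_eq_mul_ofReal {a b : ℝ} {Λ : ℂ} (hΛ : Λ.im ≠ 0)
    (h : (a : ℂ) = Λ * b) : a = 0 ∧ b = 0 := by
  have hb : b = 0 := by
    have him := congrArg im h
    simp only [ofReal_im, mul_im, ofReal_re, mul_zero, zero_add] at him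
    exact (mul_eq_zero.mp him.symm).resolve_left hΛ
  have ha : (a : ℂ) = 0 := by rw [h, hb, ofReal_zero, mul_zero]
  exact ⟨ofReal_eq_zero.mp ha, hb⟩

theorem collapse_config_L_and_S_zero (N : ℕ) (Γ : Fin N → ℝ) (z : Fin N → ℂ)
    (hz : Function.Injective z) (Λ z₀ : ℂ) (hΛ : Λ.im ≠ 0)
    (hcc : ∀ n, (∑ j ∈ univ.filter (· ≠ n),
      (Γ j : ℂ) / (starRingEnd ℂ) (z n - z j)) = Λ * (z n - z₀)) :
    (∑ j, ∑ k, if j < k then Γ j * Γ k else 0) = 0 ∧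
    (∑ j, ∑ k, if j < k then Γ j * Γ k * ‖z k - z j‖ ^ 2 else 0) = 0 := by
  -- the omitted term `j = n` is `Γ n / conj 0 = 0`
  have hcc' : ∀ n, ∑ j, (Γ j : ℂ) / conj (z n - z j) = Λ * (z n - z₀) := fun n => by
    rw [← hcc n, sum_filter_of_ne]
    rintro j - hj rfl
    simp at hj
  obtain ⟨hL, hI⟩ := eq_zero_of_ofReal_eq_mul_ofReal hΛ
    (ofReal_sum_sum_ite_lt_eq_mul_of_collapse hz hcc')
  have hM := sum_smul_sub_eq_zero_of_collapse (fun h => hΛ (by rw [h, zero_im])) hcc'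
  refine ⟨hL, ?_⟩
  have hS := sum_sum_ite_lt_mul_norm_sub_sq Γ (fun n => z n - z₀)
  simp only [sub_sub_sub_cancel_right] at hS
  rw [hS, hI, hM, norm_zero]
  ring
end

section
/- If z_1, ..., z_N are pairwise distinct complex numbers, Γ_1, ..., Γ_N are real, and V_n := Σ_{j≠n} Γ_j / conj(z_n − z_j) = 0 for every n (an equilibrium), then L = Σ_{1≤j<k≤N} Γ_j Γ_k = 0. -/
open Finset Complex

/-!
Conjugating the equilibrium equations gives `∑_{j ≠ n} Γ_j / (z_n - z_j) = 0`. Multiplying by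
`Γ_n z_n` and summing over `n` yields `∑_{n ≠ j} Γ_n Γ_j z_n / (z_n - z_j) = 0`; symmetrizing in
`(n, j)` and using `z_n / (z_n - z_j) + z_j / (z_j - z_n) = 1` turns this into
`∑_{n ≠ j} Γ_n Γ_j = 0`, which is `2 L`.
-/

section DoubleSums

variable {ι R : Type*} [DecidableEq ι] (s : Finset ι)

theorem Finset.sum_sum_filter_ne_comm [AddCommMonoid R] (f : ι → ι → R) :
    ∑ i ∈ s, ∑ j ∈ s with j ≠ i, f j i = ∑ i ∈ s, ∑ j ∈ s with j ≠ i, f i j := by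
  simp only [sum_filter]
  rw [sum_comm]
  exact sum_congr rfl fun i _ => sum_congr rfl fun j _ => if_congr ne_comm rfl rfl

theorem Finset.sum_sum_filter_ne_eq_two_mul [CommSemiring R] [LinearOrder ι] (f : ι → ι → R)
    (hf : ∀ i j, f i j = f j i) :
    ∑ i ∈ s, ∑ j ∈ s with j ≠ i, f i j = 2 * ∑ i ∈ s, ∑ j ∈ s, if i < j then f i j else 0 := by
  have hsplit : ∀ i j, (if j ≠ i then f i j else 0) =
      (if i < j then f i j else 0) + (if j < i then f i j else 0) := by
    intro i j
    rcases lt_trichotomy i j with h | rfl | h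
    · simp [h, h.ne', h.not_gt]
    · simp
    · simp [h, h.ne, h.not_gt]
  simp only [sum_filter, hsplit, sum_add_distrib]
  rw [sum_comm (f := fun i j => if j < i then f i j else 0), two_mul]
  simp only [hf]

end DoubleSums

theorem div_sub_add_div_sub_swap {K : Type*} [Field K] {a b : K} (h : a ≠ b) :
    a / (a - b) + b / (b - a) = 1 := by
  rw [← neg_sub a b, div_neg, ← sub_eq_add_neg, ← sub_div, div_self (sub_ne_zero.mpr h)]

theorem sum_sum_filter_ne_mul_eq_zero_of_sum_div_sub {ι K : Type*} [Fintype ι] [DecidableEq ι] [Field K]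
    (w z : ι → K) (hz : Function.Injective z)
    (heq : ∀ i, ∑ j ∈ univ with j ≠ i, w j / (z i - z j) = 0) :
    ∑ i, ∑ j ∈ univ with j ≠ i, w i * w j = 0 := by
  set g : ι → ι → K := fun i j => w i * w j * (z i / (z i - z j))
  have hg : ∑ i, ∑ j ∈ univ with j ≠ i, g i j = 0 := by
    refine sum_eq_zero fun i _ => ?_
    calc ∑ j ∈ univ with j ≠ i, g i j
        = w i * z i * ∑ j ∈ univ with j ≠ i, w j / (z i - z j) := by
          rw [mul_sum]; exact sum_congr rfl fun j _ => by ring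
      _ = 0 := by rw [heq i, mul_zero]
  have hpair : ∀ i, ∀ j ∈ univ.filter (· ≠ i), g i j + g j i = w i * w j := by
    intro i j hj
    have hzij : z i ≠ z j := hz.ne (mem_filter.mp hj).2.symm
    calc g i j + g j i = w i * w j * (z i / (z i - z j) + z j / (z j - z i)) := by ring
      _ = w i * w j := by rw [div_sub_add_div_sub_swap hzij, mul_one]
  calc ∑ i, ∑ j ∈ univ with j ≠ i, w i * w j
      = ∑ i, ∑ j ∈ univ with j ≠ i, (g i j + g j i) :=
        sum_congr rfl fun i _ => sum_congr rfl fun j hj => (hpair i j hj).symm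
    _ = 0 := by
      simp only [sum_add_distrib]
      rw [sum_sum_filter_ne_comm univ g, hg, add_zero]

theorem equilibrium_L_zero (N : ℕ) (Γ : Fin N → ℝ) (z : Fin N → ℂ)
    (hz : Function.Injective z)
    (heq : ∀ n, (∑ j ∈ univ.filter (· ≠ n),
      (Γ j : ℂ) / (starRingEnd ℂ) (z n - z j)) = 0) :
    (∑ j, ∑ k, if j < k then Γ j * Γ k else 0) = 0 := by
  have hconj : ∀ n, ∑ j ∈ univ with j ≠ n, (Γ j : ℂ) / (z n - z j) = 0 := fun n => by
    simpa [map_sum, map_div₀] using congrArg (starRingEnd ℂ) (heq n)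
  have hL : ((∑ i, ∑ j ∈ univ with j ≠ i, Γ i * Γ j : ℝ) : ℂ) = 0 := by
    push_cast
    exact sum_sum_filter_ne_mul_eq_zero_of_sum_div_sub _ z hz hconj
  have h2L := sum_sum_filter_ne_eq_two_mul univ (fun i j => Γ i * Γ j) fun i j => mul_comm _ _
  rw [Complex.ofReal_eq_zero.mp hL] at h2L
  linarith
end

section
/- There are no nonzero real numbers Γ_1, Γ_2, Γ_3, Γ_4 satisfying simultaneously: (Γ_1+Γ_2)(Γ_3²+Γ_4²) − (Γ_1²+Γ_2²)(Γ_3+Γ_4) = 0, Γ_1Γ_2(Γ_1+Γ_2)² + Γ_3Γ_4(Γ_3+Γ_4)² − (Γ_1+Γ_2)²(Γ_3+Γ_4)² = 0, and L = Σ_{1≤j<k≤4} Γ_j Γ_k = 0. -/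
theorem no_diagram_viii_vorticities :
    ¬ ∃ (Γ₁ Γ₂ Γ₃ Γ₄ : ℝ), Γ₁ ≠ 0 ∧ Γ₂ ≠ 0 ∧ Γ₃ ≠ 0 ∧ Γ₄ ≠ 0 ∧
      (Γ₁ + Γ₂) * (Γ₃^2 + Γ₄^2) - (Γ₁^2 + Γ₂^2) * (Γ₃ + Γ₄) = 0 ∧
      Γ₁*Γ₂*(Γ₁+Γ₂)^2 + Γ₃*Γ₄*(Γ₃+Γ₄)^2 - (Γ₁+Γ₂)^2*(Γ₃+Γ₄)^2 = 0 ∧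
      Γ₁*Γ₂ + Γ₁*Γ₃ + Γ₁*Γ₄ + Γ₂*Γ₃ + Γ₂*Γ₄ + Γ₃*Γ₄ = 0 := by
  rintro ⟨a1, a2, a3, a4, h1, h2, h3, h4, e1, e2, e3⟩
  by_cases hs : a1 + a2 + a3 + a4 = 0
  · -- b = -a case: reality of roots forces a = 0, then p + q = 0 impossible
    nlinarith [sq_nonneg (a1 - a2), sq_nonneg (a3 - a4), sq_nonneg (a1 + a2),
      mul_self_pos.mpr h1, mul_self_pos.mpr h3, sq_nonneg (a1 + a2 + a3 - a4)]
  · have hA : (a1 + a2 + a3 + a4) * ((a1 + a2) * (a3 + a4) + 2 * (a1 * a2)) = 0 := by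
      linear_combination e1 + 2 * (a1 + a2) * e3
    have hB : (a1 + a2 + a3 + a4) * ((a1 * a2) * ((a1 + a2) - (a3 + a4))
        - (a1 + a2) * (a3 + a4) ^ 2) = 0 := by
      linear_combination e2 - (a3 + a4) ^ 2 * e3
    have hA' := (mul_eq_zero.mp hA).resolve_left hs
    have hB' := (mul_eq_zero.mp hB).resolve_left hs
    have hP : a1 * a2 * (a1 + a2 + a3 + a4) = 0 := by
      linear_combination hB' + (a3 + a4) * hA'
    rcases mul_eq_zero.mp hP with hp | hsum
    · exact mul_ne_zero h1 h2 hp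
    · exact hs hsum
end

section
/- Let Γ_1, Γ_2, Γ_3, Γ_4 be nonzero real numbers with L = Σ_{1≤j<k≤4} Γ_j Γ_k = 0. Set A = Γ_1Γ_2 − Γ_3Γ_4, B = Γ_1Γ_3 − Γ_2Γ_4, C = Γ_1Γ_4 − Γ_2Γ_3. If A·B = 0, A·C = 0 and B·C = 0, then there is a permutation (i,j,k,l) of (1,2,3,4) such that Γ_i = Γ_j, Γ_k = Γ_l, and either Γ_k = (√3 − 2)·Γ_i or Γ_i = (√3 − 2)·Γ_k. -/
open Finset

lemma keyQuad (x y : ℝ) (h : x^2 + 4*(x*y) + y^2 = 0) :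
    y = (Real.sqrt 3 - 2) * x ∨ x = (Real.sqrt 3 - 2) * y := by
  have hs : Real.sqrt 3 ^ 2 = 3 := Real.sq_sqrt (by norm_num)
  have hf : (y - (Real.sqrt 3 - 2)*x) * (y - (-Real.sqrt 3 - 2)*x) = 0 := by
    linear_combination h - x^2 * hs
  rcases mul_eq_zero.mp hf with h1 | h2
  · left; linarith
  · right
    have hy : y = (-Real.sqrt 3 - 2) * x := by linarith
    have hx : (Real.sqrt 3 - 2) * y = x := by
      rw [hy]; linear_combination -x * hs
    linarith

lemma pairCase (a b c d : ℝ) (ha : a ≠ 0) (hb : b ≠ 0) (hc : c ≠ 0) (hd : d ≠ 0)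
    (hL : a*b + a*c + a*d + b*c + b*d + c*d = 0)
    (h1 : a*b - c*d = 0) (h2 : a*c - b*d = 0) :
    b = c ∧ a = d ∧ (b = (Real.sqrt 3 - 2) * a ∨ a = (Real.sqrt 3 - 2) * b) := by
  have hbc : ((b - c) * (b + c)) * (a * d) = 0 := by
    linear_combination (b*d)*h1 - (c*d)*h2
  have had : a * d ≠ 0 := mul_ne_zero ha hd
  rcases mul_eq_zero.mp hbc with hbc' | h'
  · rcases mul_eq_zero.mp hbc' with he | ho
    · -- b = c
      have hcb : c = b := by linarith
      have hadz : b * (a - d) = 0 := by linear_combination h2 + a*he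
      rcases mul_eq_zero.mp hadz with h | h
      · exact absurd h hb
      · have hda : d = a := by linarith
        rw [hcb, hda] at hL
        have hq : a^2 + 4*(a*b) + b^2 = 0 := by linear_combination hL
        exact ⟨hcb.symm, hda.symm, keyQuad a b hq⟩
    · -- b = -c, contradiction
      have hcb : c = -b := by linarith
      have hadz : b * (a + d) = 0 := by linear_combination h1 + d*ho
      rcases mul_eq_zero.mp hadz with h | h
      · exact absurd h hb
      · have hda : d = -a := by linarith
        rw [hcb, hda] at hL
        have hab : a^2 + b^2 = 0 := by linear_combination -hL
        have ha2 : 0 < a^2 := by positivity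
        nlinarith [sq_nonneg b]
  · exact absurd h' had

theorem vanishing_pair_products_force_special_vorticities (Γ : Fin 4 → ℝ)
    (hΓ : ∀ n, Γ n ≠ 0)
    (hL : Γ 0 * Γ 1 + Γ 0 * Γ 2 + Γ 0 * Γ 3 + Γ 1 * Γ 2 + Γ 1 * Γ 3 + Γ 2 * Γ 3 = 0)
    (hAB : (Γ 0 * Γ 1 - Γ 2 * Γ 3) * (Γ 0 * Γ 2 - Γ 1 * Γ 3) = 0)
    (hAC : (Γ 0 * Γ 1 - Γ 2 * Γ 3) * (Γ 0 * Γ 3 - Γ 1 * Γ 2) = 0)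
    (hBC : (Γ 0 * Γ 2 - Γ 1 * Γ 3) * (Γ 0 * Γ 3 - Γ 1 * Γ 2) = 0) :
    ∃ i j k l : Fin 4, ({i, j, k, l} : Finset (Fin 4)) = Finset.univ ∧
      Γ i = Γ j ∧ Γ k = Γ l ∧
      (Γ k = (Real.sqrt 3 - 2) * Γ i ∨ Γ i = (Real.sqrt 3 - 2) * Γ k) := by
  set a := Γ 0 with h0; set b := Γ 1 with h1; set c := Γ 2 with h2; set d := Γ 3 with h3
  have ha : a ≠ 0 := hΓ 0
  have hb : b ≠ 0 := hΓ 1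
  have hc : c ≠ 0 := hΓ 2
  have hd : d ≠ 0 := hΓ 3
  have caseAB : a*b - c*d = 0 → a*c - b*d = 0 →
      ∃ i j k l : Fin 4, ({i, j, k, l} : Finset (Fin 4)) = Finset.univ ∧
      Γ i = Γ j ∧ Γ k = Γ l ∧
      (Γ k = (Real.sqrt 3 - 2) * Γ i ∨ Γ i = (Real.sqrt 3 - 2) * Γ k) := by
    intro hA hB
    obtain ⟨e1, e2, e3⟩ := pairCase a b c d ha hb hc hd (by linarith) hA hB
    exact ⟨0, 3, 1, 2, by decide, e2, e1, e3⟩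
  have caseAC : a*b - c*d = 0 → a*d - b*c = 0 →
      ∃ i j k l : Fin 4, ({i, j, k, l} : Finset (Fin 4)) = Finset.univ ∧
      Γ i = Γ j ∧ Γ k = Γ l ∧
      (Γ k = (Real.sqrt 3 - 2) * Γ i ∨ Γ i = (Real.sqrt 3 - 2) * Γ k) := by
    intro hA hC
    obtain ⟨e1, e2, e3⟩ := pairCase a b d c ha hb hd hc (by linarith) (by linarith) hC
    exact ⟨0, 2, 1, 3, by decide, e2, e1, e3⟩
  have caseBC : a*c - b*d = 0 → a*d - b*c = 0 →
      ∃ i j k l : Fin 4, ({i, j, k, l} : Finset (Fin 4)) = Finset.univ ∧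
      Γ i = Γ j ∧ Γ k = Γ l ∧
      (Γ k = (Real.sqrt 3 - 2) * Γ i ∨ Γ i = (Real.sqrt 3 - 2) * Γ k) := by
    intro hB hC
    obtain ⟨e1, e2, e3⟩ := pairCase a c d b ha hc hd hb (by linarith) (by linarith) (by linarith)
    exact ⟨0, 1, 2, 3, by decide, e2, e1, e3⟩
  rcases mul_eq_zero.mp hAB with hA | hB
  · rcases mul_eq_zero.mp hBC with hB | hC
    · exact caseAB hA hB
    · exact caseAC hA hC
  · rcases mul_eq_zero.mp hAC with hA | hC
    · exact caseAB hA hB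
    · exact caseBC hB hC
end

section
/- For every real number a with 11/12 < a² < 9/4, one has 64a⁴ − 20 > 0 and 0 < (144a⁶ − 121a²)/(64a⁴ − 20) < 2a². -/
theorem five_vortex_parameter_range (a : ℝ) (h1 : 11/12 < a^2) (h2 : a^2 < 9/4) :
    64*a^4 - 20 > 0 ∧ 0 < (144*a^6 - 121*a^2)/(64*a^4 - 20) ∧
      (144*a^6 - 121*a^2)/(64*a^4 - 20) < 2*a^2 := by
  have hd : 64*a^4 - 20 > 0 := by nlinarith [sq_nonneg (a^2 - 11/12), sq_nonneg a]
  have hn : 144*a^6 - 121*a^2 > 0 := by nlinarith [sq_nonneg a, sq_nonneg (a^2)]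
  refine ⟨hd, div_pos hn hd, ?_⟩
  rw [div_lt_iff₀ hd]
  nlinarith [sq_nonneg a, sq_nonneg (a^2), mul_pos hd hd]
end

section
/- Let a, b, c be nonzero real numbers satisfying b² = (144a⁶ − 121a²)/(64a⁴ − 20) (with 64a⁴ − 20 ≠ 0) and c² = 2a² − b². Set Γ_1 = Γ_2 = 1, Γ_3 = Γ_4 = −1/2, Γ_5 = 3/4, and positions z_1 = a, z_2 = −a, z_3 = b + ic, z_4 = −b − ic, z_5 = 0 (which are pairwise distinct), and Λ = (−a² + 5b² − 10ibc − 5c²)/(2a²(b² − 4ibc − 3c²)). Then for every n ∈ {1,...,5}, Λ·z_n = Σ_{j≠n} Γ_j / conj(z_n − z_j); moreover |Λ| = 1 and Im(Λ) ≠ 0. In particular the configuration is a collapse configuration of the five-vortex problem. -/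
/-!
Swapping vortices 1 ↔ 2 and 3 ↔ 4 negates every position and preserves every strength, so it
negates the velocity field: the collapse equations at vortices 2, 4, 5 follow from those at
vortices 1 and 3. Writing `w = b + c i`, the constraint on `c²` says `|w|² = 2a²`, and with it
`Λ = 5/(4a²) + 1/(w̄² - a²)`, which satisfies both remaining equations by direct computation.
Then `Im Λ = 2bc / |w̄² - a²|²`, and the constraint on `b²` is exactly the condition `|Λ| = 1`.
-/

open Finset Complex ComplexConjugate

/-- Up to the factor `i / 2π`, the velocity of the `n`-th vortex. -/
noncomputable def vortexVelocity {ι : Type*} [Fintype ι] [DecidableEq ι] (Γ : ι → ℝ)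
    (z : ι → ℂ) (n : ι) : ℂ :=
  ∑ j ∈ univ.filter (· ≠ n), (Γ j : ℂ) / conj (z n - z j)

section Symmetric

variable {ι : Type*} [Fintype ι] [DecidableEq ι] {Γ : ι → ℝ} {z : ι → ℂ} {σ : Equiv.Perm ι}

theorem vortexVelocity_perm_eq_neg (hz : ∀ j, z (σ j) = -z j) (hΓ : ∀ j, Γ (σ j) = Γ j)
    (n : ι) : vortexVelocity Γ z (σ n) = -vortexVelocity Γ z n := by
  unfold vortexVelocity
  rw [sum_filter, sum_filter, ← sum_neg_distrib, ← Equiv.sum_comp σ]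
  refine sum_congr rfl fun j _ => ?_
  simp only [σ.injective.ne_iff, hz, hΓ, ← neg_sub', map_neg, div_neg]
  split_ifs <;> simp

theorem mul_eq_vortexVelocity_perm {Λ : ℂ} {n : ι} (hz : ∀ j, z (σ j) = -z j)
    (hΓ : ∀ j, Γ (σ j) = Γ j) (h : Λ * z n = vortexVelocity Γ z n) :
    Λ * z (σ n) = vortexVelocity Γ z (σ n) := by
  rw [hz, vortexVelocity_perm_eq_neg hz hΓ, ← h, mul_neg]

theorem mul_eq_vortexVelocity_of_perm_fixed (Λ : ℂ) {n : ι} (hz : ∀ j, z (σ j) = -z j)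
    (hΓ : ∀ j, Γ (σ j) = Γ j) (hn : σ n = n) : Λ * z n = vortexVelocity Γ z n := by
  have hv := vortexVelocity_perm_eq_neg hz hΓ n
  have hzn := hz n
  rw [hn, self_eq_neg] at hv hzn
  rw [hv, hzn, mul_zero]

end Symmetric

section FiveVortices

def swapPairs : Equiv.Perm (Fin 5) := Equiv.swap 0 1 * Equiv.swap 2 3

theorem vecCons_swapPairs_neg (x y : ℂ) (j : Fin 5) :
    ![x, -x, y, -y, 0] (swapPairs j) = -![x, -x, y, -y, 0] j := by
  fin_cases j <;> simp [swapPairs, Equiv.swap_apply_of_ne_of_ne]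

theorem vecCons_swapPairs {α : Type*} (p q r : α) (j : Fin 5) :
    ![p, p, q, q, r] (swapPairs j) = ![p, p, q, q, r] j := by
  fin_cases j <;> simp [swapPairs, Equiv.swap_apply_of_ne_of_ne]

theorem vecCons_neg_injective {x y : ℂ} (hx : x ≠ 0) (hy : y ≠ 0) (hxy : x ≠ y)
    (hxy' : x ≠ -y) : Function.Injective ![x, -x, y, -y, 0] := by
  intro i j h
  fin_cases i <;> fin_cases j <;> simp at h ⊢ <;> grind

theorem vortexVelocity_zero (p q r : ℝ) (x y : ℂ) :
    vortexVelocity ![p, p, q, q, r] ![x, -x, y, -y, 0] 0 =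
      p / (2 * conj x) + q / (conj x - conj y) + q / (conj x + conj y) + r / conj x := by
  simp [vortexVelocity, sum_filter, Fin.sum_univ_five, two_mul]

theorem vortexVelocity_two (p q r : ℝ) (x y : ℂ) :
    vortexVelocity ![p, p, q, q, r] ![x, -x, y, -y, 0] 2 =
      p / (conj y - conj x) + p / (conj y + conj x) + q / (2 * conj y) + r / conj y := by
  simp [vortexVelocity, sum_filter, Fin.sum_univ_five, two_mul]

end FiveVortices

noncomputable def collapseRate (a : ℝ) (w : ℂ) : ℂ :=
  5 / (4 * a ^ 2) + 1 / (conj w ^ 2 - a ^ 2)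

section CollapseRate

variable {a : ℝ} {w : ℂ}

theorem sub_ofReal_ne_zero (hw : w.im ≠ 0) (a : ℝ) : w - a ≠ 0 :=
  fun h => hw (by simpa using congrArg im h)

theorem add_ofReal_ne_zero (hw : w.im ≠ 0) (a : ℝ) : w + a ≠ 0 :=
  fun h => hw (by simpa using congrArg im h)

theorem conj_sq_sub_ofReal_sq_ne_zero (hw : w.im ≠ 0) : conj w ^ 2 - a ^ 2 ≠ 0 := by
  have hw' : (conj w).im ≠ 0 := by simpa using hw
  rw [sq_sub_sq]
  exact mul_ne_zero (add_ofReal_ne_zero hw' a) (sub_ofReal_ne_zero hw' a)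

theorem collapseRate_eq_div (ha : a ≠ 0) (hw : w.im ≠ 0) :
    collapseRate a w = (5 * conj w ^ 2 - a ^ 2) / (4 * a ^ 2 * (conj w ^ 2 - a ^ 2)) := by
  have hD := conj_sq_sub_ofReal_sq_ne_zero (a := a) hw
  have ha' : (a : ℂ) ≠ 0 := ofReal_ne_zero.mpr ha
  rw [collapseRate]
  field_simp
  ring

theorem collapseRate_add_mul_I_eq_div {b c : ℝ} (ha : a ≠ 0) (hc : c ≠ 0)
    (hc2 : c ^ 2 = 2 * a ^ 2 - b ^ 2) :
    collapseRate a (b + c * I) = (-(a : ℂ) ^ 2 + 5 * b ^ 2 - 10 * I * b * c - 5 * c ^ 2) /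
      (2 * a ^ 2 * ((b : ℂ) ^ 2 - 4 * I * b * c - 3 * c ^ 2)) := by
  have hc2' : (c : ℂ) ^ 2 = 2 * a ^ 2 - b ^ 2 := by exact_mod_cast hc2
  rw [collapseRate_eq_div ha (by simpa using hc)]
  simp only [map_add, map_mul, conj_ofReal, conj_I]
  congr 1
  · linear_combination (5 * c ^ 2 : ℂ) * I_sq
  · linear_combination (4 * a ^ 2 * c ^ 2 : ℂ) * I_sq + 2 * a ^ 2 * hc2'

theorem collapseRate_im (a : ℝ) (w : ℂ) :
    (collapseRate a w).im = 2 * w.re * w.im / normSq (conj w ^ 2 - a ^ 2) := by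
  simp only [collapseRate, pow_two, one_div, add_im, div_im, im_ofNat, mul_re, re_ofNat,
    ofReal_re, ofReal_im, mul_zero, sub_zero, mul_im, zero_mul, add_zero, map_mul,
    normSq_ofNat, normSq_ofReal, zero_div, sub_self, inv_im, sub_im, conj_re, conj_im, mul_neg,
    neg_mul, neg_add_rev, neg_neg, zero_add]
  ring

theorem collapseRate_im_ne_zero (a : ℝ) (hre : w.re ≠ 0) (him : w.im ≠ 0) :
    (collapseRate a w).im ≠ 0 := by
  rw [collapseRate_im]
  exact div_ne_zero (by positivity) (normSq_pos.mpr (conj_sq_sub_ofReal_sq_ne_zero him)).ne'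

/-- Once `c²` is eliminated, `hb2` is the equation `‖5 w̄² - a²‖² = ‖4 a² (w̄² - a²)‖²`
divided by `a²`. -/
theorem norm_collapseRate {b c : ℝ} (ha : a ≠ 0) (hc : c ≠ 0) (hc2 : c ^ 2 = 2 * a ^ 2 - b ^ 2)
    (hb2 : b ^ 2 * (64 * a ^ 4 - 20) = 144 * a ^ 6 - 121 * a ^ 2) :
    ‖collapseRate a (b + c * I)‖ = 1 := by
  have hw : (b + c * I : ℂ).im ≠ 0 := by simpa using hc
  have hD : (4 * a ^ 2 * (conj (b + c * I) ^ 2 - a ^ 2) : ℂ) ≠ 0 :=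
    mul_ne_zero (by simpa using ha) (conj_sq_sub_ofReal_sq_ne_zero hw)
  rw [collapseRate_eq_div ha hw, norm_div, div_eq_one_iff_eq (norm_ne_zero_iff.mpr hD),
    norm_def, norm_def]
  congr 1
  simp only [map_add, conj_ofReal, map_mul, conj_I, mul_neg, pow_two, normSq_apply, sub_re,
    mul_re, re_ofNat, add_re, ofReal_re, neg_re, I_re, mul_zero, ofReal_im, I_im, mul_one,
    sub_self, neg_zero, add_zero, add_im, neg_im, mul_im, zero_add, neg_mul, neg_neg, im_ofNat,
    zero_mul, sub_zero, sub_im]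
  linear_combination
    ((25 - 16 * a ^ 4) * (b ^ 2 + c ^ 2 + 2 * a ^ 2) - (32 * a ^ 6 - 10 * a ^ 2)) * hc2 +
      a ^ 2 * hb2

theorem collapseRate_mul_eq_vortexVelocity_zero (ha : a ≠ 0) (hw : w.im ≠ 0) :
    collapseRate a w * a =
      vortexVelocity ![1, 1, -1/2, -1/2, 3/4] ![(a : ℂ), -a, w, -w, 0] 0 := by
  have hw' : (conj w).im ≠ 0 := by simpa using hw
  have hD := conj_sq_sub_ofReal_sq_ne_zero (a := a) hw
  have ha' : (a : ℂ) ≠ 0 := ofReal_ne_zero.mpr ha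
  have hsub : (a : ℂ) - conj w ≠ 0 := by
    rw [← neg_ne_zero, neg_sub]
    exact sub_ofReal_ne_zero hw' a
  have hadd : (a : ℂ) + conj w ≠ 0 := by
    rw [add_comm]
    exact add_ofReal_ne_zero hw' a
  rw [vortexVelocity_zero, collapseRate, conj_ofReal]
  push_cast
  field_simp
  ring

theorem collapseRate_mul_eq_vortexVelocity_two (hw : w.im ≠ 0) (hnorm : w * conj w = 2 * a ^ 2) :
    collapseRate a w * w =
      vortexVelocity ![1, 1, -1/2, -1/2, 3/4] ![(a : ℂ), -a, w, -w, 0] 2 := by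
  have hw' : (conj w).im ≠ 0 := by simpa using hw
  have hD := conj_sq_sub_ofReal_sq_ne_zero (a := a) hw
  have hw0 : conj w ≠ 0 := fun h => hw' (by simp [h])
  have ha : (a : ℂ) ≠ 0 := by
    rintro h
    rw [h] at hnorm
    simp_all
  have hsub := sub_ofReal_ne_zero hw' a
  have hadd := add_ofReal_ne_zero hw' a
  rw [vortexVelocity_two, collapseRate, conj_ofReal]
  push_cast
  field_simp
  linear_combination
    4 * (conj w ^ 2 - a ^ 2) * (5 * (conj w ^ 2 - a ^ 2) + 4 * a ^ 2) * hnorm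

end CollapseRate

theorem five_vortex_collapse_family (a b c : ℝ)
    (ha : a ≠ 0) (hb : b ≠ 0) (hc : c ≠ 0)
    (hden : 64*a^4 - 20 ≠ 0)
    (hb2 : b^2 = (144*a^6 - 121*a^2)/(64*a^4 - 20))
    (hc2 : c^2 = 2*a^2 - b^2)
    (Γ : Fin 5 → ℝ) (hΓ : Γ = ![1, 1, -1/2, -1/2, 3/4])
    (z : Fin 5 → ℂ)
    (hz : z = ![(a : ℂ), -(a : ℂ), (b : ℂ) + (c : ℂ)*Complex.I,
      -((b : ℂ) + (c : ℂ)*Complex.I), 0])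
    (Λ : ℂ)
    (hΛ : Λ = (-(a:ℂ)^2 + 5*(b:ℂ)^2 - 10*Complex.I*(b:ℂ)*(c:ℂ) - 5*(c:ℂ)^2)
        / (2*(a:ℂ)^2 * ((b:ℂ)^2 - 4*Complex.I*(b:ℂ)*(c:ℂ) - 3*(c:ℂ)^2))) :
    Function.Injective z ∧
    (∀ n, Λ * z n = ∑ j ∈ univ.filter (· ≠ n),
      (Γ j : ℂ) / (starRingEnd ℂ) (z n - z j)) ∧
    ‖Λ‖ = 1 ∧ Λ.im ≠ 0 := by
  set w : ℂ := b + c * I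
  have hw : w.im ≠ 0 := by simpa [w] using hc
  have hnorm : w * conj w = 2 * a ^ 2 := by
    rw [mul_conj, normSq_add_mul_I]
    exact_mod_cast (by linarith : b ^ 2 + c ^ 2 = 2 * a ^ 2)
  rw [← collapseRate_add_mul_I_eq_div ha hc hc2] at hΛ
  subst hz hΓ hΛ
  refine ⟨vecCons_neg_injective (ofReal_ne_zero.mpr ha) (fun h => hw (by simp [h]))
      (sub_ne_zero.mp (sub_ofReal_ne_zero hw a)).symm
      (eq_neg_iff_add_eq_zero.not.mpr (by rw [add_comm]; exact add_ofReal_ne_zero hw a)),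
    ?_, norm_collapseRate ha hc hc2 ((eq_div_iff hden).mp hb2),
    collapseRate_im_ne_zero a (by simpa [w] using hb) hw⟩
  have hz := vecCons_swapPairs_neg (a : ℂ) w
  have hΓ := vecCons_swapPairs (1 : ℝ) (-1/2) (3/4)
  have h0 := collapseRate_mul_eq_vortexVelocity_zero ha hw
  have h2 := collapseRate_mul_eq_vortexVelocity_two hw hnorm
  intro n
  fin_cases n
  exacts [h0, mul_eq_vortexVelocity_perm (n := 0) hz hΓ h0, h2,
    mul_eq_vortexVelocity_perm (n := 2) hz hΓ h2, mul_eq_vortexVelocity_of_perm_fixed _ hz hΓ rfl]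
end

section
/- Let Γ_1, Γ_2, Γ_3, Γ_4 be nonzero real numbers with L = Σ_{1≤j<k≤4} Γ_jΓ_k = 0, and let Λ be a nonzero complex number. Suppose z = (z_1,...,z_4) and w = (w_1,...,w_4) ∈ ℂ⁴ satisfy: Σ_n Γ_n z_n = 0, Σ_n Γ_n w_n = 0, Σ_n Γ_n z_n w_n = 0, z_2 − z_1 = w_2 − w_1, F_z − Λ f_z = 0, Λ F_w − f_w = 0, G_z + Λ g_z = 0, Λ G_w + g_w = 0, where F_z = Σ_n Γ_n z_n² w_n, f_z = Σ_{j<k} Γ_jΓ_k(z_j + z_k), F_w = Σ_n Γ_n z_n w_n², f_w = Σ_{j<k} Γ_jΓ_k(w_j + w_k), G_z = Σ_n Γ_n w_n Π_{m≠n} z_m, g_z = Σ_{{j,k,l,m}={1,2,3,4}, j<k, l<m} Γ_jΓ_k z_l z_m, and G_w, g_w are defined symmetrically with z and w interchanged. If z_j = z_k for some j ≠ k, then z = 0 and w = 0. -/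
open Finset Complex

private lemma lin_kill (ga gb gc gd : ℝ) (ha : ga ≠ 0) (hd : gd ≠ 0)
    (hL : ga * gb + ga * gc + ga * gd + gb * gc + gb * gd + gc * gd = 0)
    (va vd : ℂ)
    (h1 : ((ga : ℂ)^2 + (gb : ℂ)^2 + (gc : ℂ)^2) * va + (gd : ℂ)^2 * vd = 0)
    (h2 : ((ga : ℂ) + (gb : ℂ) + (gc : ℂ)) * va + (gd : ℂ) * vd = 0) :
    va = 0 ∧ vd = 0 := by
  have hT : 0 < ga^2 + gb^2 + gc^2 - (ga + gb + gc) * gd := by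
    nlinarith [sq_nonneg gb, sq_nonneg gc, sq_nonneg (ga + gb + gc), mul_self_pos.mpr ha]
  have hkey : ((ga^2 + gb^2 + gc^2 - (ga + gb + gc) * gd : ℝ) : ℂ) * va = 0 := by
    push_cast
    linear_combination h1 - (gd : ℂ) * h2
  have hva : va = 0 := by
    rcases mul_eq_zero.mp hkey with h | h
    · exact absurd h (Complex.ofReal_ne_zero.mpr (ne_of_gt hT))
    · exact h
  refine ⟨hva, ?_⟩
  rw [hva, mul_zero, zero_add] at h2
  rcases mul_eq_zero.mp h2 with h | h
  · exact absurd h (Complex.ofReal_ne_zero.mpr hd)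
  · exact h

private lemma stage1b (ga gb gc gd : ℝ) (ha : ga ≠ 0) (hb : gb ≠ 0) (hc : gc ≠ 0) (hd : gd ≠ 0)
    (hL : ga * gb + ga * gc + ga * gd + gb * gc + gb * gd + gc * gd = 0)
    (Λ : ℂ) (hΛ : Λ ≠ 0) (za zb zc zd wa wb wc wd : ℂ)
    (hMz : (ga : ℂ) * za + (gb : ℂ) * zb + (gc : ℂ) * zc + (gd : ℂ) * zd = 0)
    (hMw : (ga : ℂ) * wa + (gb : ℂ) * wb + (gc : ℂ) * wc + (gd : ℂ) * wd = 0)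
    (hI : (ga : ℂ) * (za * wa) + (gb : ℂ) * (zb * wb) + (gc : ℂ) * (zc * wc) + (gd : ℂ) * (zd * wd) = 0)
    (hE5 : (ga : ℂ) * za^2 * wa + (gb : ℂ) * zb^2 * wb + (gc : ℂ) * zc^2 * wc + (gd : ℂ) * zd^2 * wd
        - Λ * ((ga : ℂ) * (gb : ℂ) * (za + zb) + (ga : ℂ) * (gc : ℂ) * (za + zc) + (ga : ℂ) * (gd : ℂ) * (za + zd)
           + (gb : ℂ) * (gc : ℂ) * (zb + zc) + (gb : ℂ) * (gd : ℂ) * (zb + zd) + (gc : ℂ) * (gd : ℂ) * (zc + zd)) = 0)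
    (hE7 : ((ga : ℂ) * wa * (zb * zc * zd) + (gb : ℂ) * wb * (za * zc * zd) + (gc : ℂ) * wc * (za * zb * zd) + (gd : ℂ) * wd * (za * zb * zc))
        + Λ * ((ga : ℂ) * (gb : ℂ) * (zc * zd) + (ga : ℂ) * (gc : ℂ) * (zb * zd) + (ga : ℂ) * (gd : ℂ) * (zb * zc)
           + (gb : ℂ) * (gc : ℂ) * (za * zd) + (gb : ℂ) * (gd : ℂ) * (za * zc) + (gc : ℂ) * (gd : ℂ) * (za * zb)) = 0)
    (hab : zb = za) (hac : zc = za) :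
    za = 0 ∧ zd = 0 := by
  rw [hab, hac] at hMz hI hE5 hE7
  have hSne : ga + gb + gc + gd ≠ 0 := by
    intro h
    have h2 : (ga + gb + gc + gd)^2 = 0 := by rw [h]; ring
    nlinarith [mul_self_pos.mpr ha, mul_self_pos.mpr hb, mul_self_pos.mpr hc, mul_self_pos.mpr hd]
  have allEq : zd = za → za = 0 ∧ zd = 0 := by
    intro h
    have hz : ((ga + gb + gc + gd : ℝ) : ℂ) * za = 0 := by
      push_cast
      linear_combination hMz - (gd : ℂ) * h
    have hza : za = 0 := by
      rcases mul_eq_zero.mp hz with h' | h'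
      · exact absurd h' (Complex.ofReal_ne_zero.mpr hSne)
      · exact h'
    exact ⟨hza, by rw [h]; exact hza⟩
  have hgd : (gd : ℂ) ≠ 0 := Complex.ofReal_ne_zero.mpr hd
  have hP2 : (gd : ℂ) * ((zd - za) * wd) = 0 := by linear_combination hI - za * hMw
  rcases mul_eq_zero.mp ((mul_eq_zero.mp hP2).resolve_left hgd) with hzd | hwd
  · exact allEq (by linear_combination hzd)
  · subst hwd
    have hP1 : Λ * (((ga : ℂ) * (gb : ℂ) * (za + za) + (ga : ℂ) * (gc : ℂ) * (za + za) + (ga : ℂ) * (gd : ℂ) * (za + zd)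
           + (gb : ℂ) * (gc : ℂ) * (za + za) + (gb : ℂ) * (gd : ℂ) * (za + zd) + (gc : ℂ) * (gd : ℂ) * (za + zd)) * za
         + ((ga : ℂ) * (gb : ℂ) * (za * zd) + (ga : ℂ) * (gc : ℂ) * (za * zd) + (ga : ℂ) * (gd : ℂ) * (za * za)
           + (gb : ℂ) * (gc : ℂ) * (za * zd) + (gb : ℂ) * (gd : ℂ) * (za * za) + (gc : ℂ) * (gd : ℂ) * (za * za))) = 0 := by
      linear_combination (-(za^3 - (za + za + za + zd) * za^2 + (za * za + za * za + za * zd + za * za + za * zd + za * zd) * za)) * hMw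
        + (-(za^2 - (za + za + za + zd) * za)) * hI + (-za) * hE5 + hE7
    have hQ : Λ * (((ga : ℂ) * (gb : ℂ) * (za + za) + (ga : ℂ) * (gc : ℂ) * (za + za) + (ga : ℂ) * (gd : ℂ) * (za + zd)
           + (gb : ℂ) * (gc : ℂ) * (za + za) + (gb : ℂ) * (gd : ℂ) * (za + zd) + (gc : ℂ) * (gd : ℂ) * (za + zd)) * zd
         + ((ga : ℂ) * (gb : ℂ) * (za * zd) + (ga : ℂ) * (gc : ℂ) * (za * zd) + (ga : ℂ) * (gd : ℂ) * (za * za)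
           + (gb : ℂ) * (gc : ℂ) * (za * zd) + (gb : ℂ) * (gd : ℂ) * (za * za) + (gc : ℂ) * (gd : ℂ) * (za * za))) = 0 := by
      linear_combination (-(zd^3 - (za + za + za + zd) * zd^2 + (za * za + za * za + za * zd + za * za + za * zd + za * zd) * zd)) * hMw
        + (-(zd^2 - (za + za + za + zd) * zd)) * hI + (-zd) * hE5 + hE7
    have p1 := (mul_eq_zero.mp hP1).resolve_left hΛ
    have q1 := (mul_eq_zero.mp hQ).resolve_left hΛ
    have hdiff : ((ga : ℂ) * (gb : ℂ) * (za + za) + (ga : ℂ) * (gc : ℂ) * (za + za) + (ga : ℂ) * (gd : ℂ) * (za + zd)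
           + (gb : ℂ) * (gc : ℂ) * (za + za) + (gb : ℂ) * (gd : ℂ) * (za + zd) + (gc : ℂ) * (gd : ℂ) * (za + zd)) * (zd - za) = 0 := by
      linear_combination q1 - p1
    rcases mul_eq_zero.mp hdiff with hFZ | hzd
    · have h1 : ((ga : ℂ)^2 + (gb : ℂ)^2 + (gc : ℂ)^2) * za + (gd : ℂ)^2 * zd = 0 := by
        linear_combination ((ga : ℂ) + (gb : ℂ) + (gc : ℂ) + (gd : ℂ)) * hMz - hFZ
      have h2 : ((ga : ℂ) + (gb : ℂ) + (gc : ℂ)) * za + (gd : ℂ) * zd = 0 := by linear_combination hMz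
      exact lin_kill ga gb gc gd ha hd hL za zd h1 h2
    · exact allEq (by linear_combination hzd)

private lemma stage1 (ga gb gc gd : ℝ) (ha : ga ≠ 0) (hb : gb ≠ 0) (hc : gc ≠ 0) (hd : gd ≠ 0)
    (hL : ga * gb + ga * gc + ga * gd + gb * gc + gb * gd + gc * gd = 0)
    (Λ : ℂ) (hΛ : Λ ≠ 0) (za zb zc zd wa wb wc wd : ℂ)
    (hMz : (ga : ℂ) * za + (gb : ℂ) * zb + (gc : ℂ) * zc + (gd : ℂ) * zd = 0)
    (hMw : (ga : ℂ) * wa + (gb : ℂ) * wb + (gc : ℂ) * wc + (gd : ℂ) * wd = 0)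
    (hI : (ga : ℂ) * (za * wa) + (gb : ℂ) * (zb * wb) + (gc : ℂ) * (zc * wc) + (gd : ℂ) * (zd * wd) = 0)
    (hE5 : (ga : ℂ) * za^2 * wa + (gb : ℂ) * zb^2 * wb + (gc : ℂ) * zc^2 * wc + (gd : ℂ) * zd^2 * wd
        - Λ * ((ga : ℂ) * (gb : ℂ) * (za + zb) + (ga : ℂ) * (gc : ℂ) * (za + zc) + (ga : ℂ) * (gd : ℂ) * (za + zd)
           + (gb : ℂ) * (gc : ℂ) * (zb + zc) + (gb : ℂ) * (gd : ℂ) * (zb + zd) + (gc : ℂ) * (gd : ℂ) * (zc + zd)) = 0)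
    (hE7 : ((ga : ℂ) * wa * (zb * zc * zd) + (gb : ℂ) * wb * (za * zc * zd) + (gc : ℂ) * wc * (za * zb * zd) + (gd : ℂ) * wd * (za * zb * zc))
        + Λ * ((ga : ℂ) * (gb : ℂ) * (zc * zd) + (ga : ℂ) * (gc : ℂ) * (zb * zd) + (ga : ℂ) * (gd : ℂ) * (zb * zc)
           + (gb : ℂ) * (gc : ℂ) * (za * zd) + (gb : ℂ) * (gd : ℂ) * (za * zc) + (gc : ℂ) * (gd : ℂ) * (za * zb)) = 0)
    (hab : zb = za) :
    za = 0 ∧ zb = 0 ∧ zc = 0 ∧ zd = 0 := by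
  rw [hab] at hMz hI hE5 hE7
  have hLc : (ga : ℂ) * (gb : ℂ) + (ga : ℂ) * (gc : ℂ) + (ga : ℂ) * (gd : ℂ)
      + (gb : ℂ) * (gc : ℂ) + (gb : ℂ) * (gd : ℂ) + (gc : ℂ) * (gd : ℂ) = 0 := by
    exact_mod_cast hL
  have hP1 : Λ * (((ga : ℂ) * (gb : ℂ) * (za + za) + (ga : ℂ) * (gc : ℂ) * (za + zc) + (ga : ℂ) * (gd : ℂ) * (za + zd)
         + (gb : ℂ) * (gc : ℂ) * (za + zc) + (gb : ℂ) * (gd : ℂ) * (za + zd) + (gc : ℂ) * (gd : ℂ) * (zc + zd)) * za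
       + ((ga : ℂ) * (gb : ℂ) * (zc * zd) + (ga : ℂ) * (gc : ℂ) * (za * zd) + (ga : ℂ) * (gd : ℂ) * (za * zc)
         + (gb : ℂ) * (gc : ℂ) * (za * zd) + (gb : ℂ) * (gd : ℂ) * (za * zc) + (gc : ℂ) * (gd : ℂ) * (za * za))) = 0 := by
    linear_combination (-(za^3 - (za + za + zc + zd) * za^2 + (za * za + za * zc + za * zd + za * zc + za * zd + zc * zd) * za)) * hMw
      + (-(za^2 - (za + za + zc + zd) * za)) * hI + (-za) * hE5 + hE7
  have p1 := (mul_eq_zero.mp hP1).resolve_left hΛ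
  have hstar : ((ga : ℂ) * (gb : ℂ)) * ((za - zc) * (za - zd)) = 0 := by
    linear_combination p1 - (za * (za + zc + zd)) * hLc
  have hzz := (mul_eq_zero.mp hstar).resolve_left
    (mul_ne_zero (Complex.ofReal_ne_zero.mpr ha) (Complex.ofReal_ne_zero.mpr hb))
  rcases mul_eq_zero.mp hzz with h | h
  · have hac : zc = za := by linear_combination -h
    obtain ⟨h1, h4⟩ := stage1b ga gb gc gd ha hb hc hd hL Λ hΛ za za zc zd wa wb wc wd
      hMz hMw hI hE5 hE7 rfl hac
    exact ⟨h1, by rw [hab]; exact h1, by rw [hac]; exact h1, h4⟩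
  · have had : zd = za := by linear_combination -h
    have hL' : ga * gb + ga * gd + ga * gc + gb * gd + gb * gc + gd * gc = 0 := by linear_combination hL
    obtain ⟨h1, h4⟩ := stage1b ga gb gd gc ha hb hd hc hL' Λ hΛ za za zd zc wa wb wd wc
      (by linear_combination hMz) (by linear_combination hMw) (by linear_combination hI)
      (by linear_combination hE5) (by linear_combination hE7) rfl had
    exact ⟨h1, by rw [hab]; exact h1, h4, by rw [had]; exact h1⟩

theorem z_collision_implies_trivial (Γ : Fin 4 → ℝ) (hΓ : ∀ n, Γ n ≠ 0)
    (hL : Γ 0 * Γ 1 + Γ 0 * Γ 2 + Γ 0 * Γ 3 + Γ 1 * Γ 2 + Γ 1 * Γ 3 + Γ 2 * Γ 3 = 0)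
    (Λ : ℂ) (hΛ : Λ ≠ 0) (z w : Fin 4 → ℂ)
    (hMz : ∑ n, (Γ n : ℂ) * z n = 0)
    (hMw : ∑ n, (Γ n : ℂ) * w n = 0)
    (hI : ∑ n, (Γ n : ℂ) * (z n * w n) = 0)
    (hnorm : z 1 - z 0 = w 1 - w 0)
    (hFz : (∑ n, (Γ n : ℂ) * (z n)^2 * w n)
        - Λ * (∑ j, ∑ k, if j < k then (Γ j : ℂ) * (Γ k : ℂ) * (z j + z k) else 0) = 0)
    (hFw : Λ * (∑ n, (Γ n : ℂ) * z n * (w n)^2)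
        - (∑ j, ∑ k, if j < k then (Γ j : ℂ) * (Γ k : ℂ) * (w j + w k) else 0) = 0)
    (hGz : ((Γ 0 : ℂ) * w 0 * (z 1 * z 2 * z 3) + (Γ 1 : ℂ) * w 1 * (z 0 * z 2 * z 3)
          + (Γ 2 : ℂ) * w 2 * (z 0 * z 1 * z 3) + (Γ 3 : ℂ) * w 3 * (z 0 * z 1 * z 2))
        + Λ * ((Γ 0 : ℂ) * (Γ 1 : ℂ) * (z 2 * z 3) + (Γ 0 : ℂ) * (Γ 2 : ℂ) * (z 1 * z 3)
          + (Γ 0 : ℂ) * (Γ 3 : ℂ) * (z 1 * z 2) + (Γ 1 : ℂ) * (Γ 2 : ℂ) * (z 0 * z 3)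
          + (Γ 1 : ℂ) * (Γ 3 : ℂ) * (z 0 * z 2) + (Γ 2 : ℂ) * (Γ 3 : ℂ) * (z 0 * z 1)) = 0)
    (hGw : Λ * ((Γ 0 : ℂ) * z 0 * (w 1 * w 2 * w 3) + (Γ 1 : ℂ) * z 1 * (w 0 * w 2 * w 3)
          + (Γ 2 : ℂ) * z 2 * (w 0 * w 1 * w 3) + (Γ 3 : ℂ) * z 3 * (w 0 * w 1 * w 2))
        + ((Γ 0 : ℂ) * (Γ 1 : ℂ) * (w 2 * w 3) + (Γ 0 : ℂ) * (Γ 2 : ℂ) * (w 1 * w 3)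
          + (Γ 0 : ℂ) * (Γ 3 : ℂ) * (w 1 * w 2) + (Γ 1 : ℂ) * (Γ 2 : ℂ) * (w 0 * w 3)
          + (Γ 1 : ℂ) * (Γ 3 : ℂ) * (w 0 * w 2) + (Γ 2 : ℂ) * (Γ 3 : ℂ) * (w 0 * w 1)) = 0)
    (j k : Fin 4) (hjk : j ≠ k) (hcol : z j = z k) :
    (∀ n, z n = 0) ∧ (∀ n, w n = 0) := by
  simp (config := { decide := true }) only [Fin.sum_univ_four, if_true, if_false] at hMz hMw hI hFz hFw
  have hz : z 0 = 0 ∧ z 1 = 0 ∧ z 2 = 0 ∧ z 3 = 0 := by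
    fin_cases j <;> fin_cases k
    · exact absurd rfl hjk
    · obtain ⟨hA, hB, hC, hD⟩ := stage1 (Γ 1) (Γ 0) (Γ 2) (Γ 3) (hΓ 1) (hΓ 0) (hΓ 2) (hΓ 3)
        (by linear_combination hL) Λ hΛ (z 1) (z 0) (z 2) (z 3) (w 1) (w 0) (w 2) (w 3)
        (by linear_combination hMz) (by linear_combination hMw) (by linear_combination hI)
        (by linear_combination hFz) (by linear_combination hGz) hcol
      exact ⟨hB, hA, hC, hD⟩
    · obtain ⟨hA, hB, hC, hD⟩ := stage1 (Γ 2) (Γ 0) (Γ 1) (Γ 3) (hΓ 2) (hΓ 0) (hΓ 1) (hΓ 3)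
        (by linear_combination hL) Λ hΛ (z 2) (z 0) (z 1) (z 3) (w 2) (w 0) (w 1) (w 3)
        (by linear_combination hMz) (by linear_combination hMw) (by linear_combination hI)
        (by linear_combination hFz) (by linear_combination hGz) hcol
      exact ⟨hB, hC, hA, hD⟩
    · obtain ⟨hA, hB, hC, hD⟩ := stage1 (Γ 3) (Γ 0) (Γ 1) (Γ 2) (hΓ 3) (hΓ 0) (hΓ 1) (hΓ 2)
        (by linear_combination hL) Λ hΛ (z 3) (z 0) (z 1) (z 2) (w 3) (w 0) (w 1) (w 2)
        (by linear_combination hMz) (by linear_combination hMw) (by linear_combination hI)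
        (by linear_combination hFz) (by linear_combination hGz) hcol
      exact ⟨hB, hC, hD, hA⟩
    · obtain ⟨hA, hB, hC, hD⟩ := stage1 (Γ 0) (Γ 1) (Γ 2) (Γ 3) (hΓ 0) (hΓ 1) (hΓ 2) (hΓ 3)
        (by linear_combination hL) Λ hΛ (z 0) (z 1) (z 2) (z 3) (w 0) (w 1) (w 2) (w 3)
        (by linear_combination hMz) (by linear_combination hMw) (by linear_combination hI)
        (by linear_combination hFz) (by linear_combination hGz) hcol
      exact ⟨hA, hB, hC, hD⟩
    · exact absurd rfl hjk
    · obtain ⟨hA, hB, hC, hD⟩ := stage1 (Γ 2) (Γ 1) (Γ 0) (Γ 3) (hΓ 2) (hΓ 1) (hΓ 0) (hΓ 3)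
        (by linear_combination hL) Λ hΛ (z 2) (z 1) (z 0) (z 3) (w 2) (w 1) (w 0) (w 3)
        (by linear_combination hMz) (by linear_combination hMw) (by linear_combination hI)
        (by linear_combination hFz) (by linear_combination hGz) hcol
      exact ⟨hC, hB, hA, hD⟩
    · obtain ⟨hA, hB, hC, hD⟩ := stage1 (Γ 3) (Γ 1) (Γ 0) (Γ 2) (hΓ 3) (hΓ 1) (hΓ 0) (hΓ 2)
        (by linear_combination hL) Λ hΛ (z 3) (z 1) (z 0) (z 2) (w 3) (w 1) (w 0) (w 2)
        (by linear_combination hMz) (by linear_combination hMw) (by linear_combination hI)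
        (by linear_combination hFz) (by linear_combination hGz) hcol
      exact ⟨hC, hB, hD, hA⟩
    · obtain ⟨hA, hB, hC, hD⟩ := stage1 (Γ 0) (Γ 2) (Γ 1) (Γ 3) (hΓ 0) (hΓ 2) (hΓ 1) (hΓ 3)
        (by linear_combination hL) Λ hΛ (z 0) (z 2) (z 1) (z 3) (w 0) (w 2) (w 1) (w 3)
        (by linear_combination hMz) (by linear_combination hMw) (by linear_combination hI)
        (by linear_combination hFz) (by linear_combination hGz) hcol
      exact ⟨hA, hC, hB, hD⟩
    · obtain ⟨hA, hB, hC, hD⟩ := stage1 (Γ 1) (Γ 2) (Γ 0) (Γ 3) (hΓ 1) (hΓ 2) (hΓ 0) (hΓ 3)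
        (by linear_combination hL) Λ hΛ (z 1) (z 2) (z 0) (z 3) (w 1) (w 2) (w 0) (w 3)
        (by linear_combination hMz) (by linear_combination hMw) (by linear_combination hI)
        (by linear_combination hFz) (by linear_combination hGz) hcol
      exact ⟨hC, hA, hB, hD⟩
    · exact absurd rfl hjk
    · obtain ⟨hA, hB, hC, hD⟩ := stage1 (Γ 3) (Γ 2) (Γ 0) (Γ 1) (hΓ 3) (hΓ 2) (hΓ 0) (hΓ 1)
        (by linear_combination hL) Λ hΛ (z 3) (z 2) (z 0) (z 1) (w 3) (w 2) (w 0) (w 1)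
        (by linear_combination hMz) (by linear_combination hMw) (by linear_combination hI)
        (by linear_combination hFz) (by linear_combination hGz) hcol
      exact ⟨hC, hD, hB, hA⟩
    · obtain ⟨hA, hB, hC, hD⟩ := stage1 (Γ 0) (Γ 3) (Γ 1) (Γ 2) (hΓ 0) (hΓ 3) (hΓ 1) (hΓ 2)
        (by linear_combination hL) Λ hΛ (z 0) (z 3) (z 1) (z 2) (w 0) (w 3) (w 1) (w 2)
        (by linear_combination hMz) (by linear_combination hMw) (by linear_combination hI)
        (by linear_combination hFz) (by linear_combination hGz) hcol
      exact ⟨hA, hC, hD, hB⟩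
    · obtain ⟨hA, hB, hC, hD⟩ := stage1 (Γ 1) (Γ 3) (Γ 0) (Γ 2) (hΓ 1) (hΓ 3) (hΓ 0) (hΓ 2)
        (by linear_combination hL) Λ hΛ (z 1) (z 3) (z 0) (z 2) (w 1) (w 3) (w 0) (w 2)
        (by linear_combination hMz) (by linear_combination hMw) (by linear_combination hI)
        (by linear_combination hFz) (by linear_combination hGz) hcol
      exact ⟨hC, hA, hD, hB⟩
    · obtain ⟨hA, hB, hC, hD⟩ := stage1 (Γ 2) (Γ 3) (Γ 0) (Γ 1) (hΓ 2) (hΓ 3) (hΓ 0) (hΓ 1)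
        (by linear_combination hL) Λ hΛ (z 2) (z 3) (z 0) (z 1) (w 2) (w 3) (w 0) (w 1)
        (by linear_combination hMz) (by linear_combination hMw) (by linear_combination hI)
        (by linear_combination hFz) (by linear_combination hGz) hcol
      exact ⟨hC, hD, hA, hB⟩
    · exact absurd rfl hjk
  obtain ⟨hz0, hz1, hz2, hz3⟩ := hz
  have hLc : (Γ 0 : ℂ) * (Γ 1 : ℂ) + (Γ 0 : ℂ) * (Γ 2 : ℂ) + (Γ 0 : ℂ) * (Γ 3 : ℂ)
      + (Γ 1 : ℂ) * (Γ 2 : ℂ) + (Γ 1 : ℂ) * (Γ 3 : ℂ) + (Γ 2 : ℂ) * (Γ 3 : ℂ) = 0 := by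
    exact_mod_cast hL
  rw [hz0, hz1] at hnorm
  have hw01 : w 1 = w 0 := by linear_combination -hnorm
  rw [hz0, hz1, hz2, hz3] at hFw hGw
  rw [hw01] at hMw hFw hGw
  have hstar : ((Γ 0 : ℂ) * (Γ 1 : ℂ)) * ((w 0 - w 2) * (w 0 - w 3)) = 0 := by
    linear_combination (-(w 0)) * hFw + hGw - (w 0 * (w 0 + w 2 + w 3)) * hLc
  have hww := (mul_eq_zero.mp hstar).resolve_left
    (mul_ne_zero (Complex.ofReal_ne_zero.mpr (hΓ 0)) (Complex.ofReal_ne_zero.mpr (hΓ 1)))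
  have hfinal : w 0 = 0 ∧ w 2 = 0 ∧ w 3 = 0 := by
    rcases mul_eq_zero.mp hww with h | h
    · have hw2 : w 2 = w 0 := by linear_combination -h
      rw [hw2] at hMw hFw
      have h1 : ((Γ 0 : ℂ)^2 + (Γ 1 : ℂ)^2 + (Γ 2 : ℂ)^2) * (w 0) + (Γ 3 : ℂ)^2 * (w 3) = 0 := by
        linear_combination ((Γ 0 : ℂ) + (Γ 1 : ℂ) + (Γ 2 : ℂ) + (Γ 3 : ℂ)) * hMw + hFw
      have h2 : ((Γ 0 : ℂ) + (Γ 1 : ℂ) + (Γ 2 : ℂ)) * (w 0) + (Γ 3 : ℂ) * (w 3) = 0 := by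
        linear_combination hMw
      obtain ⟨hv0, hv3⟩ := lin_kill (Γ 0) (Γ 1) (Γ 2) (Γ 3) (hΓ 0) (hΓ 3)
        (by linear_combination hL) (w 0) (w 3) h1 h2
      exact ⟨hv0, by rw [hw2]; exact hv0, hv3⟩
    · have hw3 : w 3 = w 0 := by linear_combination -h
      rw [hw3] at hMw hFw
      have h1 : ((Γ 0 : ℂ)^2 + (Γ 1 : ℂ)^2 + (Γ 3 : ℂ)^2) * (w 0) + (Γ 2 : ℂ)^2 * (w 2) = 0 := by
        linear_combination ((Γ 0 : ℂ) + (Γ 1 : ℂ) + (Γ 2 : ℂ) + (Γ 3 : ℂ)) * hMw + hFw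
      have h2 : ((Γ 0 : ℂ) + (Γ 1 : ℂ) + (Γ 3 : ℂ)) * (w 0) + (Γ 2 : ℂ) * (w 2) = 0 := by
        linear_combination hMw
      obtain ⟨hv0, hv2⟩ := lin_kill (Γ 0) (Γ 1) (Γ 3) (Γ 2) (hΓ 0) (hΓ 2)
        (by linear_combination hL) (w 0) (w 2) h1 h2
      exact ⟨hv0, hv2, by rw [hw3]; exact hv0⟩
  obtain ⟨hw0, hw2, hw3⟩ := hfinal
  have hw1 : w 1 = 0 := by rw [hw01]; exact hw0
  constructor
  · intro n; fin_cases n <;> assumption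
  · intro n; fin_cases n <;> assumption
end
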